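/- For k ≥ 2 and K(r) = (r²/4)·J(r) with J(r) = k·sin(I(r)), I(r) = 2 arctan(r^k), one has H K = -(J + r·J') where H = -∂_r² - r⁻¹∂_r + (k²/r²)·cos(2I). -/

import Mathlib

open Real Filter Topology

/-! The profile `I = 2 arctan (r ^ k)` solves `r I' = k sin I`, so `J = k sin I = r I'` is the
scaling zero mode of `H`: differentiating `r J' = k cos I · J` once more gives
`r² J'' + r J' = (k² cos² I - J²) J = k² cos (2 I) J`, i.e. `H J = 0`. For any `ψ` the product
rule gives `H (r² ψ / 4) = r² / 4 · H ψ - (ψ + r ψ')`, and `K = r² J / 4`. -/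

noncomputable def radialOp (V ψ : ℝ → ℝ) (r : ℝ) : ℝ :=
  -deriv (deriv ψ) r - deriv ψ r / r + V r * ψ r

theorem radialOp_sq_mul_div_four {V ψ : ℝ → ℝ} {r : ℝ} (hr : r ≠ 0)
    (hψ : ∀ᶠ x in 𝓝 r, DifferentiableAt ℝ ψ x) (hψ' : DifferentiableAt ℝ (deriv ψ) r) :
    radialOp V (fun x => x ^ 2 / 4 * ψ x) r
      = r ^ 2 / 4 * radialOp V ψ r - (ψ r + r * deriv ψ r) := by
  have hderiv : ∀ {x}, DifferentiableAt ℝ ψ x →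
      HasDerivAt (fun x => x ^ 2 / 4 * ψ x) (x / 2 * ψ x + x ^ 2 / 4 * deriv ψ x) x :=
    fun hx => (((hasDerivAt_pow 2 _).div_const 4).fun_mul hx.hasDerivAt).congr_deriv (by ring)
  have hderiv_eq : deriv (fun x => x ^ 2 / 4 * ψ x)
      =ᶠ[𝓝 r] fun x => x / 2 * ψ x + x ^ 2 / 4 * deriv ψ x :=
    hψ.mono fun x hx => (hderiv hx).deriv
  have hsecond : HasDerivAt (fun x => x / 2 * ψ x + x ^ 2 / 4 * deriv ψ x)
      (ψ r / 2 + r * deriv ψ r + r ^ 2 / 4 * deriv (deriv ψ) r) r := by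
    refine ((((hasDerivAt_id r).div_const 2).fun_mul hψ.self_of_nhds.hasDerivAt).fun_add
      (((hasDerivAt_pow 2 r).div_const 4).fun_mul hψ'.hasDerivAt)).congr_deriv ?_
    simp only [id, Nat.cast_ofNat, Nat.add_one_sub_one, pow_one]
    ring
  simp only [radialOp, (hsecond.congr_of_eventuallyEq hderiv_eq).deriv,
    (hderiv hψ.self_of_nhds).deriv]
  field_simp
  ring

theorem sin_two_mul_arctan (x : ℝ) : sin (2 * arctan x) = 2 * x / (1 + x ^ 2) := by
  have hpos : 0 < 1 + x ^ 2 := by positivity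
  rw [sin_two_mul, sin_arctan, cos_arctan]
  field_simp
  rw [sq_sqrt hpos.le]

theorem hasDerivAt_two_mul_arctan_pow (k : ℕ) {r : ℝ} (hr : r ≠ 0) :
    HasDerivAt (fun x => 2 * arctan (x ^ k)) (k * sin (2 * arctan (r ^ k)) / r) r := by
  refine (((hasDerivAt_pow k r).arctan).const_mul 2).congr_deriv ?_
  have hpow : (k : ℝ) * r ^ (k - 1) * r = k * r ^ k := by
    cases k with
    | zero => simp
    | succ n => rw [Nat.add_sub_cancel, pow_succ]; ring
  rw [sin_two_mul_arctan]
  field_simp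
  linear_combination hpow

section ZeroMode

variable {θ : ℝ → ℝ} {c : ℝ} (hθ : ∀ x ≠ 0, HasDerivAt θ (c * sin (θ x) / x) x)
include hθ

theorem hasDerivAt_const_mul_sin {x : ℝ} (hx : x ≠ 0) :
    HasDerivAt (fun y => c * sin (θ y)) (c * cos (θ x) * (c * sin (θ x)) / x) x :=
  ((hθ x hx).sin.const_mul c).congr_deriv (by ring)

theorem hasDerivAt_deriv_const_mul_sin {r : ℝ} (hr : r ≠ 0) :
    HasDerivAt (deriv fun y => c * sin (θ y))
      (c * sin (θ r) * (c ^ 2 * cos (θ r) ^ 2 - (c * sin (θ r)) ^ 2 - c * cos (θ r)) / r ^ 2)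
      r := by
  have hderiv_eq : deriv (fun y => c * sin (θ y))
      =ᶠ[𝓝 r] fun x => c * cos (θ x) * (c * sin (θ x)) / x :=
    (eventually_ne_nhds hr).mono fun x hx => (hasDerivAt_const_mul_sin hθ hx).deriv
  have hcos : HasDerivAt (fun y => c * cos (θ y)) (-(c * sin (θ r) * (c * sin (θ r) / r))) r :=
    ((hθ r hr).cos.const_mul c).congr_deriv (by ring)
  refine (((hcos.fun_mul ((hθ r hr).sin.const_mul c)).fun_div (hasDerivAt_id r) hr).congr_deriv
    ?_).congr_of_eventuallyEq hderiv_eq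
  simp only [id]
  field_simp
  ring

theorem radialOp_const_mul_sin_eq_zero {r : ℝ} (hr : r ≠ 0) :
    radialOp (fun x => c ^ 2 / x ^ 2 * cos (2 * θ x)) (fun x => c * sin (θ x)) r = 0 := by
  simp only [radialOp, (hasDerivAt_deriv_const_mul_sin hθ hr).deriv,
    (hasDerivAt_const_mul_sin hθ hr).deriv, cos_two_mul]
  field_simp
  linear_combination c ^ 3 * sin (θ r) * sin_sq_add_cos_sq (θ r)

end ZeroMode

theorem HK_eq_general (k : ℕ)
    (I J K : ℝ → ℝ) (hI : ∀ r : ℝ, I r = 2 * Real.arctan (r ^ k))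
    (hJ : ∀ r : ℝ, J r = (k : ℝ) * Real.sin (I r))
    (hK : ∀ r : ℝ, K r = r ^ 2 / 4 * J r) :
    ∀ r : ℝ, 0 < r →
      -deriv (deriv K) r - deriv K r / r
          + ((k : ℝ) ^ 2 / r ^ 2) * Real.cos (2 * I r) * K r
        = -(J r + r * deriv J r) := by
  intro r hr
  have hθ : ∀ x ≠ 0, HasDerivAt I (k * sin (I x) / x) x := fun x hx => by
    rw [funext hI]
    exact hasDerivAt_two_mul_arctan_pow k hx
  obtain rfl : K = fun x => x ^ 2 / 4 * J x := funext hK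
  obtain rfl : J = fun x => k * sin (I x) := funext hJ
  have hJ_diff : ∀ᶠ x in 𝓝 r, DifferentiableAt ℝ (fun y => (k : ℝ) * sin (I y)) x :=
    (eventually_ne_nhds hr.ne').mono fun x hx => (hasDerivAt_const_mul_sin hθ hx).differentiableAt
  change radialOp (fun x => (k : ℝ) ^ 2 / x ^ 2 * cos (2 * I x)) _ r = _
  rw [radialOp_sq_mul_div_four hr.ne' hJ_diff
      (hasDerivAt_deriv_const_mul_sin hθ hr.ne').differentiableAt,
    radialOp_const_mul_sin_eq_zero hθ hr.ne', mul_zero, zero_sub]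

/-- For `k ≥ 2` and `K(r) = (r²/4) J(r)`, one has `H K = -(J + r J')`,
where `H ψ = -ψ'' - ψ'/r + (k²/r²) cos(2I) ψ`. -/
theorem HK_eq (k : ℕ) (hk : 2 ≤ k)
    (I J K : ℝ → ℝ) (hI : ∀ r : ℝ, I r = 2 * Real.arctan (r ^ k))
    (hJ : ∀ r : ℝ, J r = (k : ℝ) * Real.sin (I r))
    (hK : ∀ r : ℝ, K r = r ^ 2 / 4 * J r) :
    ∀ r : ℝ, 0 < r →
      -deriv (deriv K) r - deriv K r / r
          + ((k : ℝ) ^ 2 / r ^ 2) * Real.cos (2 * I r) * K r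
        = -(J r + r * deriv J r) :=
  HK_eq_general k I J K hI hJ hK
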